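/- arXiv:2103.13461 — 7 statements merged into one kernel-verified Lean document; each statement's English description precedes it below -/
import Mathlib

section
/- Let N22 ≤ 0 be a symmetric negative semidefinite ℓ×ℓ real matrix, N12 a k×ℓ real matrix with N12 = Gᵀ N22 for some G, and set N11 := N12 N22⁺ N12ᵀ, Z̄ := −N22⁺ N12ᵀ. Then [I; Z̄]ᵀ N [I; Z̄] = 0, where N = [[N11, N12],[N12ᵀ, N22]]. -/
open Matrix

def IsMoorePenrose {l : ℕ} (A Np : Matrix (Fin l) (Fin l) ℝ) : Prop :=
  A * Np * A = A ∧ Np * A * Np = Np ∧ (A * Np)ᵀ = A * Np ∧ (Np * A)ᵀ = Np * A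

/-- The matrix `Z̄ := −N22⁺N12ᵀ` is an exact solution of the quadratic matrix
equality `[I; Z̄]ᵀ N [I; Z̄] = 0`. -/
theorem exact_solution {k l : ℕ}
    (N12 : Matrix (Fin k) (Fin l) ℝ)
    (N22 : Matrix (Fin l) (Fin l) ℝ)
    (Np : Matrix (Fin l) (Fin l) ℝ)
    (hN22 : N22ᵀ = N22)
    (hN22neg : (-N22).PosSemidef)
    (hNp : IsMoorePenrose N22 Np)
    (hG : ∃ G : Matrix (Fin l) (Fin k) ℝ, N12 = Gᵀ * N22) :
    (fromRows (1 : Matrix (Fin k) (Fin k) ℝ) (-(Np * N12ᵀ)))ᵀ *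
      fromBlocks (N12 * Np * N12ᵀ) N12 N12ᵀ N22 *
      fromRows (1 : Matrix (Fin k) (Fin k) ℝ) (-(Np * N12ᵀ)) = 0 := by
  obtain ⟨G, hGeq⟩ := hG
  obtain ⟨h1, h2, h3, h4⟩ := hNp
  subst hGeq
  rw [transpose_fromRows, Matrix.mul_assoc, fromBlocks_mul_fromRows,
    fromCols_mul_fromRows]
  simp only [Matrix.one_mul, Matrix.mul_one, transpose_mul, transpose_transpose,
    transpose_neg, hN22, Matrix.neg_mul, Matrix.mul_neg, neg_neg]
  have hc : N22 * (Np * (N22 * G)) = N22 * G := by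
    simp only [← Matrix.mul_assoc, h1]
  simp [Matrix.mul_assoc, hc]
end

section
/- Let M22 ≤ 0 be a symmetric negative semidefinite ℓ×ℓ matrix and suppose Z, Ẑ ∈ ℝ^{ℓ×k} are such that for all γ ∈ ℝ, [I; Z + γẐ]ᵀ M [I; Z + γẐ] ≥ 0 where M = [[M11, 0],[0, M22]] with M11 symmetric. Then M22 Ẑ = 0. -/
/-!
Writing `W = Z + γ Ẑ`, the block product is `M11 + Wᵀ M22 W`. Testing it against a vector `x`
gives a real quadratic in `γ`, bounded below by `0`, whose leading coefficient is
`(Ẑx)ᵀ M22 (Ẑx) ≤ 0`. A quadratic with nonpositive leading coefficient can only stay nonnegative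
if that coefficient vanishes, and for the semidefinite `-M22` a vanishing quadratic form at
`Ẑx` forces `M22 Ẑx = 0`.
-/

open Matrix

theorem eq_zero_of_nonpos_of_forall_quadratic_nonneg {K : Type*} [Field K] [LinearOrder K]
    [IsStrictOrderedRing K] {a b c : K} (ha : a ≤ 0)
    (h : ∀ x : K, 0 ≤ a * (x * x) + b * x + c) : a = 0 := by
  by_contra ha0
  have hneg : 0 < -a := by
    have := lt_of_le_of_ne ha ha0
    linarith
  have heven : ∀ x : K, 0 ≤ a * (x * x) + c := fun x => by
    linarith [h x, h (-x), neg_mul_neg x x]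
  set y := c / -a + 1
  have hy : 1 ≤ y := le_add_of_nonneg_left (div_nonneg (by simpa using heven 0) hneg.le)
  have hyy : y ≤ y * y := le_mul_of_one_le_left (by linarith) hy
  have hc : -a * (y - 1) = c := by
    simp only [y, add_sub_cancel_right]
    exact mul_div_cancel₀ c hneg.ne'
  nlinarith [heven y, mul_le_mul_of_nonneg_left hyy hneg.le]

theorem transpose_fromRows_one_mul_fromBlocks_mul_fromRows_one {R m n : Type*} [CommRing R]
    [Fintype m] [Fintype n] [DecidableEq n] (A : Matrix n n R) (B : Matrix m m R)
    (W : Matrix m n R) :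
    (fromRows (1 : Matrix n n R) W)ᵀ * fromBlocks A 0 0 B * fromRows (1 : Matrix n n R) W =
      A + Wᵀ * B * W := by
  rw [transpose_fromRows, Matrix.mul_assoc, fromBlocks_mul_fromRows, fromCols_mul_fromRows]
  simp [Matrix.mul_assoc]

theorem dotProduct_mulVec_add_smul {R n : Type*} [CommRing R] [Fintype n]
    (A : Matrix n n R) (u w : n → R) (γ : R) :
    (u + γ • w) ⬝ᵥ A *ᵥ (u + γ • w) =
      (w ⬝ᵥ A *ᵥ w) * (γ * γ) + (u ⬝ᵥ A *ᵥ w + w ⬝ᵥ A *ᵥ u) * γ + u ⬝ᵥ A *ᵥ u := by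
  simp only [mulVec_add, mulVec_smul, dotProduct_add, add_dotProduct, smul_dotProduct,
    dotProduct_smul, smul_eq_mul]
  ring

theorem mulVec_eq_zero_of_forall_nonneg_add_smul {n : Type*} [Fintype n]
    {A : Matrix n n ℝ} (hA : (-A).PosSemidef) {c : ℝ} {u w : n → ℝ}
    (h : ∀ γ : ℝ, 0 ≤ c + (u + γ • w) ⬝ᵥ A *ᵥ (u + γ • w)) : A *ᵥ w = 0 := by
  have hw : w ⬝ᵥ A *ᵥ w ≤ 0 := by
    simpa only [star_trivial, neg_mulVec, dotProduct_neg, neg_nonneg]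
      using hA.dotProduct_mulVec_nonneg w
  have hw0 : w ⬝ᵥ A *ᵥ w = 0 :=
    eq_zero_of_nonpos_of_forall_quadratic_nonneg hw (b := u ⬝ᵥ A *ᵥ w + w ⬝ᵥ A *ᵥ u)
      (c := c + u ⬝ᵥ A *ᵥ u) fun γ => by
      have := h γ
      rw [dotProduct_mulVec_add_smul] at this
      linarith
  have hnegw : (-A) *ᵥ w = 0 := by
    rw [← hA.dotProduct_mulVec_zero_iff, star_trivial, neg_mulVec, dotProduct_neg, hw0, neg_zero]
  rwa [neg_mulVec, neg_eq_zero] at hnegw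

theorem perturbation_argument_general {k l : ℕ}
    (M11 : Matrix (Fin k) (Fin k) ℝ)
    (M22 : Matrix (Fin l) (Fin l) ℝ)
    (Z Zhat : Matrix (Fin l) (Fin k) ℝ)
    (hM22neg : (-M22).PosSemidef)
    (h : ∀ γ : ℝ,
      ((fromRows (1 : Matrix (Fin k) (Fin k) ℝ) (Z + γ • Zhat))ᵀ *
        fromBlocks M11 0 0 M22 *
        fromRows (1 : Matrix (Fin k) (Fin k) ℝ) (Z + γ • Zhat)).PosSemidef) :
    M22 * Zhat = 0 := by
  refine ext_of_mulVec_single fun j => ?_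
  set x : Fin k → ℝ := Pi.single j 1
  rw [← mulVec_mulVec, zero_mulVec]
  refine mulVec_eq_zero_of_forall_nonneg_add_smul hM22neg (c := x ⬝ᵥ M11 *ᵥ x) (u := Z *ᵥ x)
    fun γ => ?_
  have hx := (h γ).dotProduct_mulVec_nonneg x
  rw [transpose_fromRows_one_mul_fromBlocks_mul_fromRows_one, star_trivial] at hx
  simpa only [add_mulVec, dotProduct_add, ← mulVec_mulVec, dotProduct_mulVec x (_ᵀ),
    vecMul_transpose, smul_mulVec] using hx

/-- Perturbation argument from the proof of the matrix Finsler's lemma: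
if `[I; Z+γẐ]ᵀ M [I; Z+γẐ] ≥ 0` for all `γ`, where `M = diag(M11, M22)` with
`M22 ≤ 0`, then `M22 Ẑ = 0`. -/
theorem perturbation_argument {k l : ℕ}
    (M11 : Matrix (Fin k) (Fin k) ℝ)
    (M22 : Matrix (Fin l) (Fin l) ℝ)
    (Z Zhat : Matrix (Fin l) (Fin k) ℝ)
    (hM11 : M11ᵀ = M11) (hM22 : M22ᵀ = M22)
    (hM22neg : (-M22).PosSemidef)
    (h : ∀ γ : ℝ,
      ((fromRows (1 : Matrix (Fin k) (Fin k) ℝ) (Z + γ • Zhat))ᵀ *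
        fromBlocks M11 0 0 M22 *
        fromRows (1 : Matrix (Fin k) (Fin k) ℝ) (Z + γ • Zhat)).PosSemidef) :
    M22 * Zhat = 0 :=
  perturbation_argument_general M11 M22 Z Zhat hM22neg h
end

section
/- Let M22, N22 be symmetric ℓ×ℓ real matrices with N22 ≤ 0 and ker N22 ⊆ ker M22, and let R be any symmetric positive semidefinite ℓ×ℓ matrix with ker N22 ⊆ ker R. Then there exists α ∈ ℝ such that M22 − α N22 − R ≥ 0. -/
/-!
Put `S = -N22` and `A = M22 - R`, so `ker S ⊆ ker A`. Write `S = L * L` with `L = √S` Hermitian,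
and let `G` be a generalized inverse of `L` (`L * G * L = L`). Then `S * (1 - G * L) = 0`, so
`A * (1 - G * L) = 0` by the kernel inclusion, and by symmetry `A = L * (G * A * G) * L`. Hence
`A + c • S = L * (G * A * G + c • 1) * L`, which is positive semidefinite once `c` bounds the
spectrum of the Hermitian matrix `G * A * G` from below.
-/

open Matrix
open scoped MatrixOrder ComplexOrder

section ContinuousFunctionalCalculus

variable {A : Type*} [Ring A] [StarRing A] [Algebra ℝ A] [TopologicalSpace A]
  [ContinuousFunctionalCalculus ℝ A IsSelfAdjoint]

-- Since `0⁻¹ = 0` in `ℝ`, `t * t⁻¹ * t = t` holds for every real `t`, zero included.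
lemma IsSelfAdjoint.mul_cfc_inv_mul_self {a : A} (ha : IsSelfAdjoint a)
    (hfin : (spectrum ℝ a).Finite) : a * cfc (·⁻¹ : ℝ → ℝ) a * a = a := by
  have hinv : ContinuousOn (·⁻¹ : ℝ → ℝ) (spectrum ℝ a) := hfin.continuousOn _
  calc a * cfc (·⁻¹ : ℝ → ℝ) a * a = cfc (fun t : ℝ ↦ t * t⁻¹ * t) a := by
        rw [cfc_mul _ _ a, cfc_mul _ _ a, cfc_id' ℝ a]
    _ = a := by simp only [mul_inv_mul_cancel, cfc_id' ℝ a]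

variable [PartialOrder A] [StarOrderedRing A]

lemma IsSelfAdjoint.exists_nonneg_add_algebraMap {a : A} (ha : IsSelfAdjoint a) :
    ∃ c : ℝ, 0 ≤ a + algebraMap ℝ A c := by
  obtain ⟨m, hm⟩ := (isCompact_iff_compactSpace.mpr
    (ContinuousFunctionalCalculus.compactSpace_spectrum (R := ℝ) a)).bddBelow
  refine ⟨-m, ?_⟩
  rw [← cfc_id' ℝ a, ← cfc_add_const (-m) _ a]
  exact cfc_nonneg fun t ht ↦ sub_nonneg.mpr (hm ht)

end ContinuousFunctionalCalculus

namespace Matrix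

variable {𝕜 n : Type*} [RCLike 𝕜] [Fintype n] [DecidableEq n]

lemma mul_eq_zero_of_ker_le {S A X : Matrix n n 𝕜}
    (hker : ∀ x, S *ᵥ x = 0 → A *ᵥ x = 0) (hX : S * X = 0) : A * X = 0 :=
  ext_of_mulVec_single fun i ↦ by
    rw [← mulVec_mulVec, hker _ (by rw [mulVec_mulVec, hX, zero_mulVec]), zero_mulVec]

lemma PosSemidef.exists_eq_conjTranspose_mul_mul_of_ker_le {S A : Matrix n n 𝕜}
    (hS : S.PosSemidef) (hA : A.IsHermitian) (hker : ∀ x, S *ᵥ x = 0 → A *ᵥ x = 0) :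
    ∃ L B : Matrix n n 𝕜, B.IsHermitian ∧ S = Lᴴ * L ∧ A = Lᴴ * B * L := by
  set L := CFC.sqrt S
  set G := cfc (·⁻¹ : ℝ → ℝ) L
  have hL_sa : IsSelfAdjoint L := .of_nonneg (CFC.sqrt_nonneg S)
  have hL : Lᴴ = L := hL_sa.star_eq
  have hG : Gᴴ = G := IsSelfAdjoint.star_eq (cfc_predicate _ L)
  have hLL : S = L * L := (CFC.sqrt_mul_sqrt_self S hS.nonneg).symm
  have hLGL : L * G * L = L := hL_sa.mul_cfc_inv_mul_self finite_real_spectrum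
  have hAGL : A = A * G * L := by
    have hS_GL : S * (1 - G * L) = 0 := by
      rw [hLL, mul_sub, mul_one, Matrix.mul_assoc, ← Matrix.mul_assoc L G L, hLGL, sub_self]
    have hA_GL := mul_eq_zero_of_ker_le hker hS_GL
    rwa [mul_sub, mul_one, sub_eq_zero, ← Matrix.mul_assoc] at hA_GL
  refine ⟨L, G * A * G, ?_, by rw [hL, hLL], ?_⟩
  · simp only [IsHermitian, conjTranspose_mul, hG, hA.eq, Matrix.mul_assoc]
  · have hLGA : A = L * G * A := by
      simpa only [conjTranspose_mul, hA.eq, hL, hG, Matrix.mul_assoc] using congrArg (·ᴴ) hAGL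
    conv_lhs => rw [hAGL, hLGA]
    simp only [hL, Matrix.mul_assoc]

lemma PosSemidef.exists_add_smul_posSemidef {S A : Matrix n n 𝕜}
    (hS : S.PosSemidef) (hA : A.IsHermitian) (hker : ∀ x, S *ᵥ x = 0 → A *ᵥ x = 0) :
    ∃ c : ℝ, (A + c • S).PosSemidef := by
  obtain ⟨L, B, hB, rfl, rfl⟩ := hS.exists_eq_conjTranspose_mul_mul_of_ker_le hA hker
  obtain ⟨c, hc⟩ := hB.isSelfAdjoint.exists_nonneg_add_algebraMap
  refine ⟨c, ?_⟩
  convert hc.posSemidef.conjTranspose_mul_mul_same L using 1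
  rw [Matrix.mul_add, Matrix.add_mul, Algebra.algebraMap_eq_smul_one, Matrix.mul_smul,
    Matrix.smul_mul, Matrix.mul_one]

end Matrix

theorem exists_alpha_psd_general {l : ℕ}
    (M22 N22 R : Matrix (Fin l) (Fin l) ℝ)
    (hM22 : M22ᵀ = M22)
    (hN22neg : (-N22).PosSemidef)
    (hkerM : ∀ x : Fin l → ℝ, N22 *ᵥ x = 0 → M22 *ᵥ x = 0)
    (hR : R.PosSemidef)
    (hkerR : ∀ x : Fin l → ℝ, N22 *ᵥ x = 0 → R *ᵥ x = 0) :
    ∃ α : ℝ, (M22 - α • N22 - R).PosSemidef := by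
  have hM : M22.IsHermitian := by rwa [IsHermitian, conjTranspose_eq_transpose_of_trivial]
  have hker : ∀ x, (-N22) *ᵥ x = 0 → (M22 - R) *ᵥ x = 0 := fun x hx ↦ by
    rw [neg_mulVec, neg_eq_zero] at hx
    rw [sub_mulVec, hkerM x hx, hkerR x hx, sub_zero]
  obtain ⟨α, hα⟩ := hN22neg.exists_add_smul_posSemidef (hM.sub hR.isHermitian) hker
  exact ⟨α, by rwa [smul_neg, ← sub_eq_add_neg, sub_right_comm] at hα⟩

/-- Final step of the matrix Finsler's lemma proof: with `N22 ≤ 0`,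
`ker N22 ⊆ ker M22` and `R ≥ 0` with `ker N22 ⊆ ker R`, a sufficiently large
`α` makes `M22 − αN22 − R` positive semidefinite. -/
theorem exists_alpha_psd {l : ℕ}
    (M22 N22 R : Matrix (Fin l) (Fin l) ℝ)
    (hM22 : M22ᵀ = M22) (hN22 : N22ᵀ = N22)
    (hN22neg : (-N22).PosSemidef)
    (hkerM : ∀ x : Fin l → ℝ, N22 *ᵥ x = 0 → M22 *ᵥ x = 0)
    (hR : R.PosSemidef)
    (hkerR : ∀ x : Fin l → ℝ, N22 *ᵥ x = 0 → R *ᵥ x = 0) :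
    ∃ α : ℝ, (M22 - α • N22 - R).PosSemidef :=
  exists_alpha_psd_general M22 N22 R hM22 hN22neg hkerM hR hkerR
end

section
/- Let M, N be symmetric ℓ×ℓ real matrices. Then xᵀMx > 0 for all nonzero x ∈ ℝ^ℓ with xᵀNx = 0 if and only if there exists α ∈ ℝ such that M − αN is positive definite. -/
/-!
Call `β` admissible on the side `R ≥ 0` (resp. `R ≤ 0`) if `β * R u < Q u` for every unit vector
`u` on that side; we need a value admissible on both sides. By compactness of the unit sphere
both sets of admissible values are open and nonempty. They cover `ℝ`: a value admissible on
neither side yields `x`, `y` with `R x < 0 < R y` and `Q y / R y ≤ β ≤ Q x / R x`, whereas `R`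
has zeros `y + t • x` with `t > 0` and with `t < 0`, and evaluating `Q > 0` there forces
`Q x / R x < Q y / R y`. Since `ℝ` is connected, the two open sets meet.
-/

open Matrix Set Metric

section Compactness

variable {X : Type*} [TopologicalSpace X] {K : Set X} {f g : X → ℝ}

theorem IsCompact.isOpen_setOf_forall_mul_lt (hK : IsCompact K) (hf : Continuous f)
    (hg : Continuous g) : IsOpen {α : ℝ | ∀ u ∈ K, α * g u < f u} :=
  isOpen_iff_mem_nhds.2 fun _ hα => hK.eventually_forall_of_forall_eventually fun u hu =>
    (isOpen_lt (by fun_prop) (by fun_prop)).mem_nhds (hα u hu)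

theorem IsCompact.exists_forall_mul_lt (hK : IsCompact K) (hf : Continuous f) (hg : Continuous g)
    (hg₀ : ∀ u ∈ K, 0 ≤ g u) (hfg : ∀ u ∈ K, g u = 0 → 0 < f u) :
    ∃ α : ℝ, ∀ u ∈ K, α * g u < f u := by
  -- `max (g u) 0` makes the cover increasing in `n` also off `K`
  let U : ℕ → Set X := fun n => {u | 0 < f u + n * max (g u) 0}
  have hU_open (n : ℕ) : IsOpen (U n) := isOpen_lt continuous_const (by fun_prop)
  have hU_mono : Monotone U := fun m n hmn u (hu : 0 < f u + m * max (g u) 0) =>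
    show 0 < f u + n * max (g u) 0 by
      nlinarith [le_max_right (g u) 0, (Nat.cast_le.2 hmn : (m : ℝ) ≤ n)]
  have hKU : K ⊆ ⋃ n, U n := by
    intro u hu
    rcases (hg₀ u hu).eq_or_lt with h | h
    · exact mem_iUnion.2 ⟨0, by simp [U, hfg u hu h.symm]⟩
    · obtain ⟨n, hn⟩ := exists_nat_gt (-f u / g u)
      refine mem_iUnion.2 ⟨n, ?_⟩
      rw [div_lt_iff₀ h] at hn
      simp only [U, mem_ofPred_eq, max_eq_left h.le]
      linarith
  obtain ⟨n, hn⟩ := hK.elim_directed_cover U hU_open hKU hU_mono.directed_le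
  refine ⟨-n, fun u hu => ?_⟩
  have hu' : 0 < f u + n * max (g u) 0 := hn hu
  rw [max_eq_left (hg₀ u hu)] at hu'
  linarith

end Compactness

theorem exists_pos_root_of_neg_of_pos {a b c : ℝ} (ha : a < 0) (hc : 0 < c) :
    ∃ t, 0 < t ∧ c + b * t + a * t ^ 2 = 0 := by
  have hD : 0 ≤ b ^ 2 - 4 * a * c := by nlinarith
  obtain ⟨s, hs₀, hs⟩ : ∃ s, 0 ≤ s ∧ s ^ 2 = b ^ 2 - 4 * a * c :=
    ⟨_, Real.sqrt_nonneg _, Real.sq_sqrt hD⟩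
  have hbs : -b < s := by nlinarith
  refine ⟨(-b - s) / (2 * a), div_pos_of_neg_of_neg (by linarith) (by linarith), ?_⟩
  field_simp [ha.ne]
  linear_combination hs

theorem mul_lt_mul_of_forall_root_pos {qx qy rx ry a b : ℝ} (hx : rx < 0) (hy : 0 < ry)
    (h : ∀ t, ry + b * t + rx * t ^ 2 = 0 → 0 < qy + a * t + qx * t ^ 2) :
    qy * rx < qx * ry := by
  -- roots `t₁ > 0 > -t₂` of the `r`-polynomial then force `qx * ry - qy * rx > 0`
  have at_root (t : ℝ) (ht : ry + b * t + rx * t ^ 2 = 0) :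
      0 < t * ((ry * a - qy * b) + (qx * ry - qy * rx) * t) := by
    have := mul_pos hy (h t ht)
    linear_combination this + qy * ht
  obtain ⟨t₁, ht₁, hr₁⟩ := exists_pos_root_of_neg_of_pos (b := b) hx hy
  obtain ⟨t₂, ht₂, hr₂⟩ := exists_pos_root_of_neg_of_pos (b := -b) hx hy
  have h₁ : 0 < (ry * a - qy * b) + (qx * ry - qy * rx) * t₁ :=
    pos_of_mul_pos_right (at_root t₁ hr₁) ht₁.le
  have h₂ : (ry * a - qy * b) + (qx * ry - qy * rx) * -t₂ < 0 :=
    neg_of_mul_pos_right (at_root (-t₂) (by linear_combination hr₂)) (by linarith)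
  nlinarith

namespace QuadraticMap

variable {E : Type*}

section Module

variable [AddCommGroup E] [Module ℝ E]

theorem map_add_smul (Q : QuadraticForm ℝ E) (x y : E) (t : ℝ) :
    Q (y + t • x) = Q y + polar Q y x * t + Q x * t ^ 2 := by
  rw [QuadraticMap.map_add (⇑Q), QuadraticMap.map_smul, polar_smul_right, smul_eq_mul,
    smul_eq_mul]
  ring

theorem mul_lt_mul_of_pos_on_null {Q R : QuadraticForm ℝ E}
    (h : ∀ x, x ≠ 0 → R x = 0 → 0 < Q x) {x y : E} (hx : R x < 0) (hy : 0 < R y) :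
    Q y * R x < Q x * R y := by
  refine mul_lt_mul_of_forall_root_pos (a := polar Q y x) (b := polar R y x) hx hy fun t ht => ?_
  rw [← map_add_smul] at ht ⊢
  refine h _ (fun h₀ => ?_) ht
  rw [add_eq_zero_iff_eq_neg, ← neg_smul] at h₀
  have hRy := R.map_smul (-t) x
  rw [← h₀, smul_eq_mul] at hRy
  nlinarith

theorem forall_nonneg_or_forall_nonpos_mul_lt {Q R : QuadraticForm ℝ E}
    (h : ∀ x, x ≠ 0 → R x = 0 → 0 < Q x) (β : ℝ) :
    (∀ x, x ≠ 0 → 0 ≤ R x → β * R x < Q x) ∨ (∀ x, x ≠ 0 → R x ≤ 0 → β * R x < Q x) := by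
  by_contra! ⟨⟨y, hy₀, hRy, hQy⟩, ⟨x, hx₀, hRx, hQx⟩⟩
  have hRy' : 0 < R y := hRy.lt_of_ne fun hRy₀ => by
    have := h y hy₀ hRy₀.symm
    rw [← hRy₀, mul_zero] at hQy
    linarith
  have hRx' : R x < 0 := hRx.lt_of_ne fun hRx₀ => by
    have := h x hx₀ hRx₀
    rw [hRx₀, mul_zero] at hQx
    linarith
  nlinarith [mul_lt_mul_of_pos_on_null h hRx' hRy']

end Module

section Normed

variable [NormedAddCommGroup E] [NormedSpace ℝ E] {Q R : QuadraticForm ℝ E} {α : ℝ}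

theorem mul_lt_of_forall_mem_sphere (h : ∀ u ∈ sphere (0 : E) 1, α * R u < Q u) {x : E}
    (hx : x ≠ 0) : α * R x < Q x := by
  have hx' : 0 < ‖x‖ := norm_pos_iff.2 hx
  have hu := h (‖x‖⁻¹ • x) (by simp [norm_smul, hx'.ne'])
  rw [R.map_smul, Q.map_smul, smul_eq_mul, smul_eq_mul] at hu
  have : 0 < ‖x‖⁻¹ * ‖x‖⁻¹ := by positivity
  nlinarith

variable [FiniteDimensional ℝ E]

theorem exists_forall_mul_lt_of_pos_on_null (hQ : Continuous Q) (hR : Continuous R)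
    (h : ∀ x, x ≠ 0 → R x = 0 → 0 < Q x) : ∃ α : ℝ, ∀ x, x ≠ 0 → α * R x < Q x := by
  have hS₀ : ∀ u ∈ sphere (0 : E) 1, u ≠ 0 := fun u hu => ne_zero_of_mem_unit_sphere ⟨u, hu⟩
  set Kp := sphere (0 : E) 1 ∩ {u | 0 ≤ R u}
  set Kn := sphere (0 : E) 1 ∩ {u | R u ≤ 0}
  have hKp : IsCompact Kp := (isCompact_sphere 0 1).inter_right (isClosed_le continuous_const hR)
  have hKn : IsCompact Kn := (isCompact_sphere 0 1).inter_right (isClosed_le hR continuous_const)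
  set Ap := {α : ℝ | ∀ u ∈ Kp, α * R u < Q u}
  set An := {α : ℝ | ∀ u ∈ Kn, α * R u < Q u}
  have hAp : Ap.Nonempty :=
    hKp.exists_forall_mul_lt hQ hR (fun u hu => hu.2) fun u hu => h u (hS₀ u hu.1)
  have hAn : An.Nonempty := by
    obtain ⟨α, hα⟩ := hKn.exists_forall_mul_lt hQ (g := fun u => -R u) (by fun_prop)
      (fun u hu => neg_nonneg.2 hu.2) fun u hu hu₀ => h u (hS₀ u hu.1) (neg_eq_zero.1 hu₀)
    exact ⟨-α, fun u hu => by simpa using hα u hu⟩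
  have hcover : univ ⊆ Ap ∪ An := fun β _ =>
    (forall_nonneg_or_forall_nonpos_mul_lt h β).imp
      (fun hβ u hu => hβ u (hS₀ u hu.1) hu.2) fun hβ u hu => hβ u (hS₀ u hu.1) hu.2
  obtain ⟨α, -, hαp, hαn⟩ := isPreconnected_univ Ap An (hKp.isOpen_setOf_forall_mul_lt hQ hR)
    (hKn.isOpen_setOf_forall_mul_lt hQ hR) hcover (by simpa using hAp) (by simpa using hAn)
  refine ⟨α, fun x hx => mul_lt_of_forall_mem_sphere (fun u hu => ?_) hx⟩
  rcases le_total 0 (R u) with hRu | hRu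
  · exact hαp u ⟨hu, hRu⟩
  · exact hαn u ⟨hu, hRu⟩

end Normed

end QuadraticMap

theorem Matrix.toQuadraticForm'_apply {n R : Type*} [Fintype n] [DecidableEq n] [CommRing R]
    (M : Matrix n n R) (x : n → R) : M.toQuadraticForm' x = x ⬝ᵥ M *ᵥ x :=
  toLinearMap₂'_apply' M x x

theorem Matrix.continuous_toQuadraticForm' {n : Type*} [Fintype n] [DecidableEq n]
    (M : Matrix n n ℝ) : Continuous M.toQuadraticForm' := by
  simp only [funext M.toQuadraticForm'_apply]
  fun_prop

/-- Classical strict Finsler's lemma (Proposition 5). -/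
theorem strict_finsler {l : ℕ}
    (M N : Matrix (Fin l) (Fin l) ℝ)
    (hM : Mᵀ = M) (hN : Nᵀ = N) :
    (∀ x : Fin l → ℝ, x ≠ 0 → x ⬝ᵥ (N *ᵥ x) = 0 → 0 < x ⬝ᵥ (M *ᵥ x)) ↔
      ∃ α : ℝ, (M - α • N).PosDef := by
  constructor
  · intro H
    obtain ⟨α, hα⟩ := QuadraticMap.exists_forall_mul_lt_of_pos_on_null
      M.continuous_toQuadraticForm' N.continuous_toQuadraticForm'
      (by simpa only [toQuadraticForm'_apply] using H)
    refine ⟨α, PosDef.of_toQuadraticForm' (by simp [IsSymm, hM, hN]) fun x hx => ?_⟩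
    simpa [toQuadraticForm'_apply, sub_mulVec, smul_mulVec] using hα x hx
  · rintro ⟨α, hα⟩ x hx hNx
    simpa [sub_mulVec, smul_mulVec, hNx] using hα.dotProduct_mulVec_pos hx
end

section
/- Let M, N be symmetric ℓ×ℓ real matrices and assume N is indefinite, i.e., there exist vectors u, v with uᵀNu > 0 and vᵀNv < 0. Then xᵀMx ≥ 0 for all x ∈ ℝ^ℓ with xᵀNx = 0 if and only if there exists α ∈ ℝ such that M − αN is positive semidefinite. -/
/-!
Restrict both quadratic forms to the line `t ↦ t • x + y` through a point `x` with `xᵀNx > 0`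
and a point `y` with `yᵀNy < 0`. There `N` gives a quadratic in `t` with two real roots
`t₁ < 0 < t₂`, and `M` is nonnegative at both roots; combining the two values with weights `t₂`
and `-t₁` gives `xᵀMx · yᵀNy ≤ yᵀMy · xᵀNx`. So every ratio `yᵀMy / yᵀNy` with `yᵀNy < 0`
is at most every ratio `xᵀMx / xᵀNx` with `xᵀNx > 0`, and any `α` between the two sets of
ratios makes `M - α • N` positive semidefinite.
-/

open Matrix

lemma exists_roots_of_pos_of_neg {a c : ℝ} (b : ℝ) (ha : 0 < a) (hc : c < 0) :
    ∃ t₁ t₂ : ℝ, t₁ < 0 ∧ 0 < t₂ ∧ ∀ t, a * t ^ 2 + b * t + c = a * (t - t₁) * (t - t₂) := by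
  set d := √(b ^ 2 - 4 * a * c)
  have hd : d ^ 2 = b ^ 2 - 4 * a * c := Real.sq_sqrt (by nlinarith)
  have hd_nonneg : 0 ≤ d := Real.sqrt_nonneg _
  have hbd : b < d ∧ -b < d := by constructor <;> nlinarith
  refine ⟨(-b - d) / (2 * a), (-b + d) / (2 * a),
    div_neg_of_neg_of_pos (by linarith) (by linarith), div_pos (by linarith) (by linarith),
    fun t => ?_⟩
  field_simp
  linear_combination hd

lemma mul_mul_le_of_quadratic_nonneg {p q s t₁ t₂ : ℝ} (ht₁ : t₁ < 0) (ht₂ : 0 < t₂)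
    (h₁ : 0 ≤ p * t₁ ^ 2 + q * t₁ + s) (h₂ : 0 ≤ p * t₂ ^ 2 + q * t₂ + s) :
    p * (t₁ * t₂) ≤ s := by
  have hweighted : 0 ≤ (t₂ - t₁) * (s - p * (t₁ * t₂)) := by
    nlinarith [mul_nonneg ht₂.le h₁, mul_nonneg (neg_nonneg.2 ht₁.le) h₂]
  linarith [nonneg_of_mul_nonneg_right hweighted (by linarith)]

lemma exists_forall_mul_le_of_cross_le {E : Type*} {f g : E → ℝ}
    (hpos : ∃ u, 0 < g u) (hneg : ∃ v, g v < 0) (hzero : ∀ x, g x = 0 → 0 ≤ f x)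
    (hcross : ∀ x y, 0 < g x → g y < 0 → f x * g y ≤ f y * g x) :
    ∃ α : ℝ, ∀ x, α * g x ≤ f x := by
  obtain ⟨u, hu⟩ := hpos
  obtain ⟨v, hv⟩ := hneg
  set S := (fun y => f y / g y) '' {y | g y < 0}
  have hS_le : ∀ x, 0 < g x → ∀ s ∈ S, s ≤ f x / g x := by
    rintro x hx _ ⟨y, hy, rfl⟩
    rw [div_le_iff_of_neg hy, div_mul_eq_mul_div, div_le_iff₀ hx]
    exact hcross x y hx hy
  refine ⟨sSup S, fun x => ?_⟩
  rcases lt_trichotomy (g x) 0 with hx | hx | hx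
  · exact (div_le_iff_of_neg hx).1 (le_csSup ⟨_, hS_le u hu⟩ ⟨x, hx, rfl⟩)
  · simpa [hx] using hzero x hx
  · exact (le_div_iff₀ hx).1 (csSup_le ⟨_, v, hv, rfl⟩ (hS_le x hx))

namespace Matrix

variable {n R : Type*} [Fintype n] [CommRing R]

lemma IsSymm.dotProduct_mulVec_comm {A : Matrix n n R} (hA : A.IsSymm) (x y : n → R) :
    y ⬝ᵥ (A *ᵥ x) = x ⬝ᵥ (A *ᵥ y) := by
  rw [dotProduct_mulVec, ← mulVec_transpose, hA.eq, dotProduct_comm]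

lemma IsSymm.dotProduct_mulVec_smul_add {A : Matrix n n R} (hA : A.IsSymm) (x y : n → R) (t : R) :
    (t • x + y) ⬝ᵥ (A *ᵥ (t • x + y)) =
      x ⬝ᵥ (A *ᵥ x) * t ^ 2 + 2 * (x ⬝ᵥ (A *ᵥ y)) * t + y ⬝ᵥ (A *ᵥ y) := by
  simp only [mulVec_add, mulVec_smul, dotProduct_add, add_dotProduct, dotProduct_smul,
    smul_dotProduct, smul_eq_mul, hA.dotProduct_mulVec_comm x y]
  ring

lemma dotProduct_sub_smul_mulVec (A B : Matrix n n R) (α : R) (x : n → R) :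
    x ⬝ᵥ ((A - α • B) *ᵥ x) = x ⬝ᵥ (A *ᵥ x) - α * x ⬝ᵥ (B *ᵥ x) := by
  rw [sub_mulVec, dotProduct_sub, smul_mulVec, dotProduct_smul, smul_eq_mul]

lemma cross_le_of_nonneg_on_null {M N : Matrix n n ℝ} (hM : M.IsSymm) (hN : N.IsSymm)
    (h : ∀ x, x ⬝ᵥ (N *ᵥ x) = 0 → 0 ≤ x ⬝ᵥ (M *ᵥ x))
    {x y : n → ℝ} (hx : 0 < x ⬝ᵥ (N *ᵥ x)) (hy : y ⬝ᵥ (N *ᵥ y) < 0) :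
    x ⬝ᵥ (M *ᵥ x) * y ⬝ᵥ (N *ᵥ y) ≤ y ⬝ᵥ (M *ᵥ y) * x ⬝ᵥ (N *ᵥ x) := by
  obtain ⟨t₁, t₂, ht₁, ht₂, hfactor⟩ := exists_roots_of_pos_of_neg (2 * x ⬝ᵥ (N *ᵥ y)) hx hy
  have hM_root : ∀ t, (x ⬝ᵥ (N *ᵥ x)) * (t - t₁) * (t - t₂) = 0 →
      0 ≤ x ⬝ᵥ (M *ᵥ x) * t ^ 2 + 2 * x ⬝ᵥ (M *ᵥ y) * t + y ⬝ᵥ (M *ᵥ y) := by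
    intro t ht
    rw [← hM.dotProduct_mulVec_smul_add]
    exact h _ (by rw [hN.dotProduct_mulVec_smul_add, hfactor, ht])
  have hprod :=
    mul_mul_le_of_quadratic_nonneg ht₁ ht₂ (hM_root t₁ (by ring)) (hM_root t₂ (by ring))
  have hvieta : x ⬝ᵥ (N *ᵥ x) * (t₁ * t₂) = y ⬝ᵥ (N *ᵥ y) := by linarith [hfactor 0]
  calc x ⬝ᵥ (M *ᵥ x) * y ⬝ᵥ (N *ᵥ y)
      = x ⬝ᵥ (N *ᵥ x) * (x ⬝ᵥ (M *ᵥ x) * (t₁ * t₂)) := by rw [← hvieta]; ring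
    _ ≤ x ⬝ᵥ (N *ᵥ x) * y ⬝ᵥ (M *ᵥ y) := mul_le_mul_of_nonneg_left hprod hx.le
    _ = y ⬝ᵥ (M *ᵥ y) * x ⬝ᵥ (N *ᵥ x) := mul_comm _ _

end Matrix

/-- Classical non-strict Finsler's lemma (Proposition 6). -/
theorem nonstrict_finsler {l : ℕ}
    (M N : Matrix (Fin l) (Fin l) ℝ)
    (hM : Mᵀ = M) (hN : Nᵀ = N)
    (hindef : ∃ u v : Fin l → ℝ, 0 < u ⬝ᵥ (N *ᵥ u) ∧ v ⬝ᵥ (N *ᵥ v) < 0) :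
    (∀ x : Fin l → ℝ, x ⬝ᵥ (N *ᵥ x) = 0 → 0 ≤ x ⬝ᵥ (M *ᵥ x)) ↔
      ∃ α : ℝ, (M - α • N).PosSemidef := by
  obtain ⟨u, v, hu, hv⟩ := hindef
  constructor
  · intro h
    obtain ⟨α, hα⟩ := exists_forall_mul_le_of_cross_le ⟨u, hu⟩ ⟨v, hv⟩ h
      (fun x y hx hy => cross_le_of_nonneg_on_null hM hN h hx hy)
    refine ⟨α, .of_dotProduct_mulVec_nonneg ?_ fun x => ?_⟩
    · rw [isHermitian_iff_isSymm]
      exact IsSymm.sub hM (IsSymm.smul hN α)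
    · rw [star_trivial, dotProduct_sub_smul_mulVec]
      linarith [hα x]
  · rintro ⟨α, hP⟩ x hx
    simpa [dotProduct_sub_smul_mulVec, hx] using hP.dotProduct_mulVec_nonneg x
end

section
/- Let X₋ ∈ ℝ^{n×T}, U₋ ∈ ℝ^{m×T}, X₊ ∈ ℝ^{n×T} be real matrices. Suppose there exist a symmetric positive definite P ∈ ℝ^{n×n}, L ∈ ℝ^{m×n}, and β > 0 such that the 4×4 block matrix [[P−βI, 0, 0, 0],[0, −P, −Lᵀ, 0],[0, −L, 0, L],[0, 0, Lᵀ, P]] + vvᵀ ≥ 0, where v = [X₊; −X₋; −U₋; 0]. Then with K := LP⁻¹, for every pair (A,B) with X₊ = AX₋ + BU₋ one has P − (A+BK)P(A+BK)ᵀ ≥ βI, hence A+BK is Schur stable. -/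
/-!
Multiply the LMI from both sides by the block row `w = [I, A, B, -BK]` and its transpose.
The data relation `X₊ = A X₋ + B U₋` says exactly that `w v = 0`, so the data term disappears,
and since `B K P = B L` the fourth block column is eliminated (this is the Schur complement
step); what is left is `P - βI - (A + BK) P (A + BK)ᵀ`. Stability follows from this Lyapunov
inequality: for a left eigenvector `x` of `A + BK` with eigenvalue `μ`, it gives
`(1 - |μ|²) xᴴPx > 0`.
-/

open Matrix
open scoped ComplexOrder

namespace Matrix

variable {ι 𝕜 : Type*} [Fintype ι] [RCLike 𝕜]

theorem norm_lt_one_of_mem_spectrum_of_lyapunov [DecidableEq ι] {N Q : Matrix ι ι 𝕜}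
    (hQ : Q.PosDef) (hN : (Q - N * Q * Nᴴ).PosDef) {μ : 𝕜} (hμ : μ ∈ spectrum 𝕜 N) :
    ‖μ‖ < 1 := by
  have hμ' : star μ ∈ spectrum 𝕜 (toLin' Nᴴ) := by
    rw [spectrum_toLin', ← star_eq_conjTranspose, spectrum.map_star]
    simpa using hμ
  obtain ⟨x, hx⟩ :=
    (Module.End.hasEigenvalue_iff_mem_spectrum.mpr hμ').exists_hasEigenvector
  have hNx : Nᴴ *ᵥ x = star μ • x := hx.apply_eq_smul
  have hquad : star x ⬝ᵥ ((Q - N * Q * Nᴴ) *ᵥ x)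
      = ((1 - ‖μ‖ ^ 2 : ℝ) : 𝕜) * (star x ⬝ᵥ (Q *ᵥ x)) := by
    have hNQN :
        star x ⬝ᵥ ((N * Q * Nᴴ) *ᵥ x) = star (Nᴴ *ᵥ x) ⬝ᵥ (Q *ᵥ (Nᴴ *ᵥ x)) := by
      rw [← mulVec_mulVec, ← mulVec_mulVec, dotProduct_mulVec, star_mulVec,
        conjTranspose_conjTranspose]
    rw [sub_mulVec, dotProduct_sub, hNQN, hNx, star_smul, star_star, mulVec_smul,
      smul_dotProduct, dotProduct_smul, smul_eq_mul, smul_eq_mul, ← mul_assoc,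
      RCLike.star_def, RCLike.mul_conj]
    push_cast
    ring
  have hpos := hN.re_dotProduct_pos hx.2
  rw [hquad, RCLike.re_ofReal_mul] at hpos
  have hμ1 : 0 < 1 - ‖μ‖ ^ 2 := pos_of_mul_pos_left hpos (hQ.re_dotProduct_pos hx.2).le
  nlinarith [norm_nonneg μ]

theorem re_star_dotProduct_map_algebraMap_mulVec (S : Matrix ι ι ℝ) (x : ι → 𝕜) :
    RCLike.re (star x ⬝ᵥ (S.map (algebraMap ℝ 𝕜) *ᵥ x))
      = (RCLike.re ∘ x) ⬝ᵥ (S *ᵥ (RCLike.re ∘ x))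
        + (RCLike.im ∘ x) ⬝ᵥ (S *ᵥ (RCLike.im ∘ x)) := by
  simp only [dotProduct, mulVec, Finset.mul_sum, ← Finset.sum_add_distrib, map_sum]
  refine Finset.sum_congr rfl fun i _ => Finset.sum_congr rfl fun j _ => ?_
  simp only [Pi.star_apply, map_apply, Function.comp_apply, RCLike.star_def, RCLike.mul_re,
    RCLike.mul_im, RCLike.conj_re, RCLike.conj_im, RCLike.algebraMap_eq_ofReal, RCLike.ofReal_re,
    RCLike.ofReal_im]
  ring

theorem PosDef.map_algebraMap {S : Matrix ι ι ℝ} (hS : S.PosDef) :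
    (S.map (algebraMap ℝ 𝕜)).PosDef := by
  have hherm : (S.map (algebraMap ℝ 𝕜)).IsHermitian :=
    hS.isHermitian.map _ fun r => by simp [RCLike.algebraMap_eq_ofReal]
  refine PosDef.of_dotProduct_mulVec_pos hherm fun x hx => RCLike.pos_iff.mpr
    ⟨?_, hherm.im_star_dotProduct_mulVec_self x⟩
  have hpos (v : ι → ℝ) (hv : v ≠ 0) : 0 < v ⬝ᵥ (S *ᵥ v) := by
    simpa using hS.dotProduct_mulVec_pos hv
  have hnonneg (v : ι → ℝ) : 0 ≤ v ⬝ᵥ (S *ᵥ v) := by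
    simpa using hS.posSemidef.dotProduct_mulVec_nonneg v
  rw [re_star_dotProduct_map_algebraMap_mulVec]
  by_cases hre : RCLike.re ∘ x = 0
  · have him : RCLike.im ∘ x ≠ 0 := fun him => hx <| funext fun i => RCLike.ext
      (by simpa using congrFun hre i) (by simpa using congrFun him i)
    exact add_pos_of_nonneg_of_pos (hnonneg _) (hpos _ him)
  · exact add_pos_of_pos_of_nonneg (hpos _ hre) (hnonneg _)

theorem norm_lt_one_of_mem_spectrum_map_of_lyapunov [DecidableEq ι] {M P : Matrix ι ι ℝ}
    (hP : P.PosDef) (hM : (P - M * P * Mᵀ).PosDef) {μ : ℂ}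
    (hμ : μ ∈ spectrum ℂ (M.map (algebraMap ℝ ℂ))) : ‖μ‖ < 1 := by
  refine norm_lt_one_of_mem_spectrum_of_lyapunov hP.map_algebraMap ?_ hμ
  have hct : (M.map (algebraMap ℝ ℂ))ᴴ = Mᵀ.map (algebraMap ℝ ℂ) := by
    rw [← conjTranspose_map _ fun r => by simp, conjTranspose_eq_transpose_of_trivial]
  rw [hct]
  simpa only [← RingHom.mapMatrix_apply, map_sub, map_mul] using
    hM.map_algebraMap (𝕜 := ℂ)

end Matrix

section

variable {R n m : Type*} [CommRing R] [Fintype n] [Fintype m] [DecidableEq n]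

theorem fromCols_mul_fromRows_eq_sub_mul_add_mul {T : Type*} (A : Matrix n n R)
    (B : Matrix n m R) (K : Matrix m n R) (Xm Xp : Matrix n T R) (Um : Matrix m T R) :
    fromCols (fromCols (1 : Matrix n n R) A) (fromCols B (-(B * K))) *
        fromRows (fromRows Xp (-Xm)) (fromRows (-Um) (0 : Matrix n T R))
      = Xp - (A * Xm + B * Um) := by
  simp only [fromCols_mul_fromRows, Matrix.one_mul, Matrix.mul_neg, Matrix.mul_zero]
  abel

theorem fromCols_mul_fromBlocks_mul_transpose_eq_sub_mul_mul_transpose {A E P : Matrix n n R}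
    {B : Matrix n m R} {K L : Matrix m n R} (hP : Pᵀ = P) (hKP : K * P = L) :
    fromCols (fromCols (1 : Matrix n n R) A) (fromCols B (-(B * K))) *
        fromBlocks (fromBlocks E 0 0 (-P)) (fromBlocks 0 0 (-Lᵀ) 0)
          (fromBlocks 0 (-L) 0 0) (fromBlocks 0 L Lᵀ P) *
        (fromCols (fromCols (1 : Matrix n n R) A) (fromCols B (-(B * K))))ᵀ
      = E - (A + B * K) * P * (A + B * K)ᵀ := by
  subst hKP
  simp only [fromCols_mul_fromBlocks, transpose_fromCols, fromCols_mul_fromRows,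
    Matrix.one_mul, Matrix.mul_one, Matrix.mul_zero, Matrix.zero_mul, Matrix.mul_neg,
    Matrix.neg_mul, add_zero, zero_add, transpose_add, transpose_mul, transpose_neg,
    transpose_one, hP, neg_zero, Matrix.add_mul, Matrix.mul_add, Matrix.mul_assoc]
  abel

end

/-- "If" direction of Theorem 2: feasibility of the data-based LMI implies that
`K := LP⁻¹` stabilizes all systems `(A,B)` explaining the noise-free data. -/
theorem data_driven_stabilization_if {n m T : ℕ}
    (Xm Xp : Matrix (Fin n) (Fin T) ℝ) (Um : Matrix (Fin m) (Fin T) ℝ)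
    (P : Matrix (Fin n) (Fin n) ℝ) (L : Matrix (Fin m) (Fin n) ℝ) (β : ℝ)
    (hP : P.PosDef) (hβ : 0 < β)
    (hLMI :
      (fromBlocks
        (fromBlocks (P - β • (1 : Matrix (Fin n) (Fin n) ℝ)) 0 0 (-P))
        (fromBlocks 0 0 (-Lᵀ) 0)
        (fromBlocks 0 (-L) 0 0)
        (fromBlocks 0 L Lᵀ P) +
       fromRows (fromRows Xp (-Xm)) (fromRows (-Um) (0 : Matrix (Fin n) (Fin T) ℝ)) *
        (fromRows (fromRows Xp (-Xm)) (fromRows (-Um) (0 : Matrix (Fin n) (Fin T) ℝ)))ᵀ).PosSemidef) :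
    ∀ (A : Matrix (Fin n) (Fin n) ℝ) (B : Matrix (Fin n) (Fin m) ℝ),
      Xp = A * Xm + B * Um →
      (P - (A + B * (L * P⁻¹)) * P * (A + B * (L * P⁻¹))ᵀ -
        β • (1 : Matrix (Fin n) (Fin n) ℝ)).PosSemidef ∧
      ∀ μ ∈ spectrum ℂ ((A + B * (L * P⁻¹)).map (algebraMap ℝ ℂ)), ‖μ‖ < 1 := by
  intro A B hdata
  set K := L * P⁻¹
  have hKP : K * P = L := nonsing_inv_mul_cancel_right P L hP.det_pos.ne'.isUnit
  have hPt : Pᵀ = P := (isHermitian_iff_isSymm.mp hP.isHermitian).eq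
  set w := fromCols (fromCols (1 : Matrix (Fin n) (Fin n) ℝ) A) (fromCols B (-(B * K)))
  set v := fromRows (fromRows Xp (-Xm)) (fromRows (-Um) (0 : Matrix (Fin n) (Fin T) ℝ))
  have hwv : w * v = 0 := by
    rw [fromCols_mul_fromRows_eq_sub_mul_add_mul, hdata, sub_self]
  have hlyap :
      (P - (A + B * K) * P * (A + B * K)ᵀ - β • (1 : Matrix (Fin n) (Fin n) ℝ)).PosSemidef := by
    have hcongr := hLMI.mul_mul_conjTranspose_same w
    rwa [conjTranspose_eq_transpose_of_trivial, Matrix.mul_add, Matrix.add_mul,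
      ← Matrix.mul_assoc w, hwv, Matrix.zero_mul, Matrix.zero_mul, add_zero,
      fromCols_mul_fromBlocks_mul_transpose_eq_sub_mul_mul_transpose hPt hKP,
      sub_right_comm] at hcongr
  refine ⟨hlyap, fun μ hμ => norm_lt_one_of_mem_spectrum_map_of_lyapunov hP ?_ hμ⟩
  simpa using PosDef.posSemidef_add hlyap (PosDef.one.smul hβ)
end

section
/- Let P ∈ ℝ^{n×n} be symmetric positive definite, K ∈ ℝ^{m×n}, A ∈ ℝ^{n×n}, B ∈ ℝ^{n×m}, β > 0, and set L := KP. Suppose the 4×4 block matrix [[P−βI, 0, 0, 0],[0, −P, −Lᵀ, 0],[0, −L, 0, L],[0, 0, Lᵀ, P]] + vvᵀ ≥ 0 with v = [X₊; −X₋; −U₋; 0] and X₊ = AX₋ + BU₋. Then P − (A+BK)P(A+BK)ᵀ ≥ βI. -/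
open Matrix

/-!
Conjugating the LMI with the row `[I, A, B, -BK]` annihilates the data term, since
`[I, A, B, -BK] * [X₊; -X₋; -U₋; 0] = X₊ - A X₋ - B U₋ = 0`, while the remaining block matrix
(with `L = KP`) is mapped exactly onto `P - βI - (A + BK) P (A + BK)ᵀ`.
-/

namespace Matrix

lemma PosSemidef.mul_mul_conjTranspose_of_mul_eq_zero {ι κ μ R : Type*} [Ring R] [PartialOrder R]
    [StarRing R] [Fintype ι] [Fintype κ] [Finite μ] {M : Matrix ι ι R} {V : Matrix ι κ R}
    (hMV : (M + V * Vᴴ).PosSemidef) (C : Matrix μ ι R) (hCV : C * V = 0) :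
    (C * M * Cᴴ).PosSemidef := by
  have hconj : C * (M + V * Vᴴ) * Cᴴ = C * M * Cᴴ := by
    rw [Matrix.mul_add, Matrix.add_mul, ← Matrix.mul_assoc, hCV, Matrix.zero_mul,
      Matrix.zero_mul, add_zero]
  simpa only [hconj] using hMV.mul_mul_conjTranspose_same C

end Matrix

section LyapunovLMI

variable {n m τ R : Type*} [DecidableEq n] [CommRing R]

def lmiBlock (P : Matrix n n R) (L : Matrix m n R) (β : R) :
    Matrix ((n ⊕ n) ⊕ (m ⊕ n)) ((n ⊕ n) ⊕ (m ⊕ n)) R :=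
  fromBlocks (fromBlocks (P - β • 1) 0 0 (-P)) (fromBlocks 0 0 (-Lᵀ) 0)
    (fromBlocks 0 (-L) 0 0) (fromBlocks 0 L Lᵀ P)

variable [Fintype m]

def closedLoopRow (A : Matrix n n R) (B : Matrix n m R) (K : Matrix m n R) :
    Matrix n ((n ⊕ n) ⊕ (m ⊕ n)) R :=
  fromCols (fromCols 1 A) (fromCols B (-(B * K)))

variable [Fintype n]

lemma closedLoopRow_mul_fromRows_eq_zero {A : Matrix n n R} {B : Matrix n m R} (K : Matrix m n R)
    {Xm Xp : Matrix n τ R} {Um : Matrix m τ R} (hdata : Xp = A * Xm + B * Um) :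
    closedLoopRow A B K * fromRows (fromRows Xp (-Xm)) (fromRows (-Um) (0 : Matrix n τ R)) =
      0 := by
  simp [closedLoopRow, fromCols_mul_fromRows, hdata]

lemma closedLoopRow_mul_lmiBlock_mul_transpose {P : Matrix n n R} (hP : P.IsSymm)
    (A : Matrix n n R) (B : Matrix n m R) (K : Matrix m n R) (β : R) :
    closedLoopRow A B K * lmiBlock P (K * P) β * (closedLoopRow A B K)ᵀ =
      P - (A + B * K) * P * (A + B * K)ᵀ - β • 1 := by
  simp only [closedLoopRow, lmiBlock, transpose_fromCols, fromCols_mul_fromBlocks,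
    fromCols_mul_fromRows, Matrix.mul_zero, Matrix.zero_mul, Matrix.mul_one, Matrix.one_mul,
    Matrix.mul_neg, Matrix.neg_mul, add_zero, zero_add, Matrix.add_mul, Matrix.mul_add,
    transpose_add, transpose_mul, transpose_one, transpose_neg, Matrix.mul_assoc, hP.eq]
  abel

end LyapunovLMI

theorem lmi_implies_lyapunov_general {n m T : ℕ}
    (Xm Xp : Matrix (Fin n) (Fin T) ℝ) (Um : Matrix (Fin m) (Fin T) ℝ)
    (P : Matrix (Fin n) (Fin n) ℝ) (K : Matrix (Fin m) (Fin n) ℝ)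
    (A : Matrix (Fin n) (Fin n) ℝ) (B : Matrix (Fin n) (Fin m) ℝ) (β : ℝ)
    (hP : P.PosDef)
    (hdata : Xp = A * Xm + B * Um)
    (hLMI :
      (fromBlocks
        (fromBlocks (P - β • (1 : Matrix (Fin n) (Fin n) ℝ)) 0 0 (-P))
        (fromBlocks 0 0 (-(K * P)ᵀ) 0)
        (fromBlocks 0 (-(K * P)) 0 0)
        (fromBlocks 0 (K * P) (K * P)ᵀ P) +
       fromRows (fromRows Xp (-Xm)) (fromRows (-Um) (0 : Matrix (Fin n) (Fin T) ℝ)) *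
        (fromRows (fromRows Xp (-Xm)) (fromRows (-Um) (0 : Matrix (Fin n) (Fin T) ℝ)))ᵀ).PosSemidef) :
    (P - (A + B * K) * P * (A + B * K)ᵀ - β • (1 : Matrix (Fin n) (Fin n) ℝ)).PosSemidef := by
  have hLMI' : (lmiBlock P (K * P) β + fromRows (fromRows Xp (-Xm)) (fromRows (-Um) 0) *
      (fromRows (fromRows Xp (-Xm)) (fromRows (-Um) 0))ᴴ).PosSemidef := by
    rwa [conjTranspose_eq_transpose_of_trivial]
  have hconj := hLMI'.mul_mul_conjTranspose_of_mul_eq_zero (closedLoopRow A B K)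
    (closedLoopRow_mul_fromRows_eq_zero K hdata)
  rwa [conjTranspose_eq_transpose_of_trivial,
    closedLoopRow_mul_lmiBlock_mul_transpose (isHermitian_iff_isSymm.mp hP.isHermitian)] at hconj

/-- Special case of the computation in the proof of Theorem 2: with `L := KP`,
feasibility of the LMI yields the Lyapunov inequality `P − (A+BK)P(A+BK)ᵀ ≥ βI`. -/
theorem lmi_implies_lyapunov {n m T : ℕ}
    (Xm Xp : Matrix (Fin n) (Fin T) ℝ) (Um : Matrix (Fin m) (Fin T) ℝ)
    (P : Matrix (Fin n) (Fin n) ℝ) (K : Matrix (Fin m) (Fin n) ℝ)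
    (A : Matrix (Fin n) (Fin n) ℝ) (B : Matrix (Fin n) (Fin m) ℝ) (β : ℝ)
    (hP : P.PosDef) (hβ : 0 < β)
    (hdata : Xp = A * Xm + B * Um)
    (hLMI :
      (fromBlocks
        (fromBlocks (P - β • (1 : Matrix (Fin n) (Fin n) ℝ)) 0 0 (-P))
        (fromBlocks 0 0 (-(K * P)ᵀ) 0)
        (fromBlocks 0 (-(K * P)) 0 0)
        (fromBlocks 0 (K * P) (K * P)ᵀ P) +
       fromRows (fromRows Xp (-Xm)) (fromRows (-Um) (0 : Matrix (Fin n) (Fin T) ℝ)) *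
        (fromRows (fromRows Xp (-Xm)) (fromRows (-Um) (0 : Matrix (Fin n) (Fin T) ℝ)))ᵀ).PosSemidef) :
    (P - (A + B * K) * P * (A + B * K)ᵀ - β • (1 : Matrix (Fin n) (Fin n) ℝ)).PosSemidef :=
  lmi_implies_lyapunov_general Xm Xp Um P K A B β hP hdata hLMI
end
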